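/- Chaining bound: for a continuous function y : [0,T] → ℝ^d, sup over pairs s ≤ t ≤ s + T/2^n of |y(t) - y(s)| is at most 2 · Σ_{m≥0} max_{0 ≤ k ≤ 2^{n+m}-1} |y((k+1)T/2^{n+m}) - y(kT/2^{n+m})|. -/

import Mathlib

open Set ENNReal Filter Topology

/-!
Approximate a point `x ∈ [0, T]` from below by the grid points
`x_N = ⌊x 2^N / T⌋ T / 2^N`. Consecutive approximations `x_N`, `x_{N+1}` are equal or adjacent
points of the level-`N+1` grid, so `x_n → x` and continuity give
`|y x - y x_n| ≤ Σ_{m ≥ 1} M_{n+m}`, where `M_N` is the largest increment of `y` over the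
level-`N` grid. If `s ≤ t ≤ s + T/2^n`, then `s_n` and `t_n` are equal or adjacent at level `n`, so
`|y t - y s| ≤ 2 Σ_{m ≥ 1} M_{n+m} + M_n ≤ 2 Σ_{m ≥ 0} M_{n+m}`.
-/

theorem Nat.floor_mem_Icc_of_le_of_lt_add_two {R : Type*} [Semiring R] [LinearOrder R]
    [IsStrictOrderedRing R] [FloorSemiring R] {k : ℕ} {a : R} (hk : (k : R) ≤ a)
    (ha : a < k + 2) : ⌊a⌋₊ ∈ Icc k (k + 1) := by
  refine ⟨Nat.le_floor hk, Nat.lt_succ_iff.mp ?_⟩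
  rw [Nat.floor_lt ((Nat.cast_nonneg k).trans hk)]
  push_cast
  rwa [add_assoc, one_add_one_eq_two]

noncomputable section

variable {E : Type*} [PseudoEMetricSpace E] {T x : ℝ} {N : ℕ}

def dyadicPoint (T : ℝ) (N k : ℕ) : ℝ := k * T / 2 ^ N

def dyadicIndex (T : ℝ) (N : ℕ) (x : ℝ) : ℕ := ⌊x * 2 ^ N / T⌋₊

def dyadicApprox (T : ℝ) (N : ℕ) (x : ℝ) : ℝ := dyadicPoint T N (dyadicIndex T N x)

def dyadicIncrement (T : ℝ) (y : ℝ → E) (N : ℕ) : ℝ≥0∞ :=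
  ⨆ k : Fin (2 ^ N), edist (y (dyadicPoint T N (k + 1))) (y (dyadicPoint T N k))

lemma dyadicPoint_succ_two_mul (T : ℝ) (N k : ℕ) :
    dyadicPoint T (N + 1) (2 * k) = dyadicPoint T N k := by
  simp only [dyadicPoint, pow_succ]
  push_cast
  field_simp

lemma dyadicIndex_le_two_pow (hT : 0 < T) (hx : x ≤ T) : dyadicIndex T N x ≤ 2 ^ N := by
  refine Nat.floor_le_of_le ?_
  rw [div_le_iff₀ hT]
  push_cast
  nlinarith [(by positivity : (0 : ℝ) < 2 ^ N)]

lemma dyadicIndex_succ_mem_Icc (hT : 0 < T) (hx : 0 ≤ x) :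
    dyadicIndex T (N + 1) x ∈ Icc (2 * dyadicIndex T N x) (2 * dyadicIndex T N x + 1) := by
  unfold dyadicIndex
  have hu : 0 ≤ x * 2 ^ N / T := by positivity
  have hdouble : x * 2 ^ (N + 1) / T = 2 * (x * 2 ^ N / T) := by ring
  apply Nat.floor_mem_Icc_of_le_of_lt_add_two <;> rw [hdouble] <;> push_cast
  · linarith [Nat.floor_le hu]
  · linarith [Nat.lt_floor_add_one (x * 2 ^ N / T)]

lemma dyadicIndex_mem_Icc_of_le_of_le_add {s t : ℝ} (hT : 0 < T) (hs : 0 ≤ s) (hst : s ≤ t)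
    (hts : t ≤ s + T / 2 ^ N) :
    dyadicIndex T N t ∈ Icc (dyadicIndex T N s) (dyadicIndex T N s + 1) := by
  unfold dyadicIndex
  have hu : 0 ≤ s * 2 ^ N / T := by positivity
  have hv : t * 2 ^ N / T ≤ s * 2 ^ N / T + 1 := by
    rw [div_add_one hT.ne', div_le_div_iff_of_pos_right hT]
    calc t * 2 ^ N ≤ (s + T / 2 ^ N) * 2 ^ N := by gcongr
      _ = s * 2 ^ N + T := by field_simp
  apply Nat.floor_mem_Icc_of_le_of_lt_add_two
  · exact (Nat.floor_le hu).trans (by gcongr)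
  · linarith [Nat.lt_floor_add_one (s * 2 ^ N / T)]

lemma dyadicApprox_le (hT : 0 < T) (hx : 0 ≤ x) : dyadicApprox T N x ≤ x := by
  rw [dyadicApprox, dyadicPoint, div_le_iff₀ (by positivity), ← le_div_iff₀ hT]
  exact Nat.floor_le (by positivity)

lemma sub_lt_dyadicApprox (hT : 0 < T) : x - T / 2 ^ N < dyadicApprox T N x := by
  have h := Nat.lt_floor_add_one (x * 2 ^ N / T)
  rw [div_lt_iff₀ hT] at h
  rw [dyadicApprox, dyadicPoint, dyadicIndex, sub_lt_iff_lt_add, ← add_div,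
    lt_div_iff₀ (by positivity)]
  linarith

lemma dyadicApprox_mem_Icc (hT : 0 < T) (hx : x ∈ Icc 0 T) : dyadicApprox T N x ∈ Icc 0 T :=
  ⟨by unfold dyadicApprox dyadicPoint; positivity, (dyadicApprox_le hT hx.1).trans hx.2⟩

lemma tendsto_dyadicApprox (hT : 0 < T) (hx : 0 ≤ x) :
    Tendsto (fun N ↦ dyadicApprox T N x) atTop (𝓝 x) := by
  have hmesh : Tendsto (fun N : ℕ ↦ T / 2 ^ N) atTop (𝓝 0) :=
    tendsto_const_nhds.div_atTop (tendsto_pow_atTop_atTop_of_one_lt one_lt_two)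
  have hlower : Tendsto (fun N : ℕ ↦ x - T / 2 ^ N) atTop (𝓝 x) := by
    simpa using (tendsto_const_nhds (x := x)).sub hmesh
  exact tendsto_of_tendsto_of_tendsto_of_le_of_le hlower tendsto_const_nhds
    (fun N ↦ (sub_lt_dyadicApprox hT).le) (fun N ↦ dyadicApprox_le hT hx)

variable {y : ℝ → E}

lemma edist_dyadicPoint_le_dyadicIncrement {a b : ℕ} (hb : b ∈ Icc a (a + 1)) (hN : b ≤ 2 ^ N) :
    edist (y (dyadicPoint T N b)) (y (dyadicPoint T N a)) ≤ dyadicIncrement T y N := by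
  obtain ⟨hab, hba⟩ := hb
  obtain rfl | rfl : b = a ∨ b = a + 1 := by omega
  · simp
  · exact le_iSup (fun k : Fin (2 ^ N) ↦ edist (y (dyadicPoint T N (k + 1)))
      (y (dyadicPoint T N k))) ⟨a, hN⟩

lemma edist_dyadicApprox_succ_le (hT : 0 < T) (hx : x ∈ Icc 0 T) :
    edist (y (dyadicApprox T N x)) (y (dyadicApprox T (N + 1) x)) ≤
      dyadicIncrement T y (N + 1) := by
  rw [edist_comm, dyadicApprox, dyadicApprox, ← dyadicPoint_succ_two_mul T N]
  exact edist_dyadicPoint_le_dyadicIncrement (dyadicIndex_succ_mem_Icc hT hx.1)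
    (dyadicIndex_le_two_pow hT hx.2)

lemma edist_dyadicApprox_le_tsum (hT : 0 < T) (hy : ContinuousWithinAt y (Icc 0 T) x)
    (hx : x ∈ Icc 0 T) (n : ℕ) :
    edist (y (dyadicApprox T n x)) (y x) ≤ ∑' m, dyadicIncrement T y (n + m + 1) :=
  edist_le_tsum_of_edist_le_of_tendsto (f := fun N ↦ y (dyadicApprox T N x))
    (fun N ↦ dyadicIncrement T y (N + 1))
    (fun _ ↦ edist_dyadicApprox_succ_le hT hx)
    (hy.tendsto.comp (tendsto_nhdsWithin_iff.2 ⟨tendsto_dyadicApprox hT hx.1,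
      Eventually.of_forall fun _ ↦ dyadicApprox_mem_Icc hT hx⟩)) n

lemma edist_dyadicApprox_le_dyadicIncrement {s t : ℝ} (hT : 0 < T) (hs : 0 ≤ s) (hst : s ≤ t)
    (hts : t ≤ s + T / 2 ^ N) (htT : t ≤ T) :
    edist (y (dyadicApprox T N t)) (y (dyadicApprox T N s)) ≤ dyadicIncrement T y N :=
  edist_dyadicPoint_le_dyadicIncrement (dyadicIndex_mem_Icc_of_le_of_le_add hT hs hst hts)
    (dyadicIndex_le_two_pow hT htT)

theorem edist_le_two_mul_tsum_dyadicIncrement (hT : 0 < T) (hy : ContinuousOn y (Icc 0 T))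
    (n : ℕ) {s t : ℝ} (hs : 0 ≤ s) (hst : s ≤ t) (hts : t ≤ s + T / 2 ^ n) (htT : t ≤ T) :
    edist (y t) (y s) ≤ 2 * ∑' m, dyadicIncrement T y (n + m) := by
  have hsT : s ∈ Icc 0 T := ⟨hs, hst.trans htT⟩
  have htT' : t ∈ Icc 0 T := ⟨hs.trans hst, htT⟩
  set tail := ∑' m, dyadicIncrement T y (n + m + 1)
  have hsplit : ∑' m, dyadicIncrement T y (n + m) = dyadicIncrement T y n + tail :=
    tsum_eq_zero_add' ENNReal.summable
  calc edist (y t) (y s)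
      ≤ edist (y t) (y (dyadicApprox T n t))
        + edist (y (dyadicApprox T n t)) (y (dyadicApprox T n s))
        + edist (y (dyadicApprox T n s)) (y s) := edist_triangle4 _ _ _ _
    _ ≤ tail + dyadicIncrement T y n + tail := by
      gcongr
      · rw [edist_comm]; exact edist_dyadicApprox_le_tsum hT (hy t htT') htT' n
      · exact edist_dyadicApprox_le_dyadicIncrement hT hs hst hts htT
      · exact edist_dyadicApprox_le_tsum hT (hy s hsT) hsT n
    _ = (dyadicIncrement T y n + tail) + tail := by ring
    _ ≤ 2 * ∑' m, dyadicIncrement T y (n + m) := by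
      rw [hsplit, two_mul]
      gcongr
      exact le_add_self

end

/-- Chaining bound: for continuous `y : [0,T] → ℝ^d` and `n ≥ 0`,
`sup { ‖y t - y s‖ : 0 ≤ s ≤ t ≤ s + T/2^n, t ≤ T }` is at most
`2 Σ_{m ≥ 0} max_{0 ≤ k < 2^{n+m}} ‖y(t^{n+m}_{k+1}) - y(t^{n+m}_k)‖`,
where `t^n_k = kT/2^n`. -/
theorem chaining_bound {d : ℕ} (T : ℝ) (hT : 0 < T)
    (y : ℝ → EuclideanSpace ℝ (Fin d)) (hy : ContinuousOn y (Icc 0 T)) (n : ℕ) :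
    (⨆ p : {p : ℝ × ℝ // 0 ≤ p.1 ∧ p.1 ≤ p.2 ∧ p.2 ≤ p.1 + T / 2 ^ n ∧ p.2 ≤ T},
        ENNReal.ofReal ‖y p.1.2 - y p.1.1‖)
      ≤ 2 * ∑' m : ℕ, ⨆ k : Fin (2 ^ (n + m)),
          ENNReal.ofReal
            ‖y ((((k : ℕ) : ℝ) + 1) * T / 2 ^ (n + m)) - y (((k : ℕ) : ℝ) * T / 2 ^ (n + m))‖ := by
  simp only [ofReal_norm, ← edist_eq_enorm_sub]
  refine iSup_le fun ⟨⟨s, t⟩, hs, hst, hts, htT⟩ ↦ ?_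
  simpa [dyadicIncrement, dyadicPoint] using
    edist_le_two_mul_tsum_dyadicIncrement hT hy n hs hst hts htT
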